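/- Entropy of an optimizer via conditional entropies (equation (15) of Theorem 1's proof): suppose random variables X : Ω → 𝒳, Y : Ω → 𝒴, U : Ω → 𝒰 (finite-valued, on a common probability space) satisfy I[X:U] = 0, I[X:U|Y] = 0, and H[Y|(X,U)] = 0. Then H[U] = H[Y|X] + Σ_{y ∈ 𝒴} μ(Y = y) · H[U | Y ← y], where any term with μ(Y = y) = 0 is taken to be 0. -/
import Mathlib


open MeasureTheory ProbabilityTheory Real

noncomputable section

variable {Ω : Type*} [MeasurableSpace Ω]

/-- Shannon entropy (natural logarithm) of a finite-valued random variable `Z` under `μ`. -/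
def ent {S : Type*} [Fintype S] (μ : Measure Ω) (Z : Ω → S) : ℝ :=
  ∑ z : S, Real.negMulLog (μ (Z ⁻¹' {z})).toReal

/-- Conditional entropy `H[Z₁ | Z₂] = H[(Z₁,Z₂)] - H[Z₂]`. -/
def condEnt {S T : Type*} [Fintype S] [Fintype T] (μ : Measure Ω)
    (Z₁ : Ω → S) (Z₂ : Ω → T) : ℝ :=
  ent μ (fun ω => (Z₁ ω, Z₂ ω)) - ent μ Z₂

/-- Mutual information `I[Z₁ : Z₂] = H[Z₁] + H[Z₂] - H[(Z₁,Z₂)]`. -/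
def mutInfo {S T : Type*} [Fintype S] [Fintype T] (μ : Measure Ω)
    (Z₁ : Ω → S) (Z₂ : Ω → T) : ℝ :=
  ent μ Z₁ + ent μ Z₂ - ent μ (fun ω => (Z₁ ω, Z₂ ω))

/-- Conditional mutual information
`I[Z₁ : Z₂ | Z₃] = H[(Z₁,Z₃)] + H[(Z₂,Z₃)] - H[(Z₁,Z₂,Z₃)] - H[Z₃]`. -/
def condMutInfo {S T R : Type*} [Fintype S] [Fintype T] [Fintype R] (μ : Measure Ω)
    (Z₁ : Ω → S) (Z₂ : Ω → T) (Z₃ : Ω → R) : ℝ :=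
  ent μ (fun ω => (Z₁ ω, Z₃ ω)) + ent μ (fun ω => (Z₂ ω, Z₃ ω))
    - ent μ (fun ω => (Z₁ ω, Z₂ ω, Z₃ ω)) - ent μ Z₃

lemma ent_comp_equiv {S T : Type*} [Fintype S] [Fintype T] (μ : Measure Ω)
    (Z : Ω → S) (e : S ≃ T) : ent μ (fun ω => e (Z ω)) = ent μ Z := by
  unfold ent
  apply Fintype.sum_equiv e.symm
  intro t
  have h : (fun ω => e (Z ω)) ⁻¹' {t} = Z ⁻¹' {e.symm t} := by
    ext ω; simp [Equiv.eq_symm_apply, eq_comm]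
  rw [h]

lemma sum_slices {S : Type*} [Fintype S] [MeasurableSpace S] [MeasurableSingletonClass S]
    (μ : Measure Ω) [IsProbabilityMeasure μ] (Z : Ω → S) (hZ : Measurable Z)
    (s : Set Ω) (hs : MeasurableSet s) :
    ∑ z : S, (μ (Z ⁻¹' {z} ∩ s)).toReal = (μ s).toReal := by
  rw [← ENNReal.toReal_sum (by intro z _; exact (measure_ne_top μ _))]
  congr 1
  rw [← measure_biUnion_finset]
  · congr 1
    ext ω; simp
  · intro a _ b _ hab
    simp only [Set.disjoint_left]
    rintro ω ⟨h1, -⟩ ⟨h2, -⟩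
    exact hab (h1.symm.trans h2)
  · intro z _
    exact (hZ (measurableSet_singleton z)).inter hs

lemma mul_negMulLog_div (p q : ℝ) (hp : 0 < p) :
    p * negMulLog (q / p) = negMulLog q + q * Real.log p := by
  rcases eq_or_ne q 0 with h | h
  · simp [h]
  · simp only [negMulLog, Real.log_div h hp.ne']
    field_simp
    ring

lemma condEnt_sum {𝒰 𝒴 : Type*}
    [Fintype 𝒴] [MeasurableSpace 𝒴] [MeasurableSingletonClass 𝒴]
    [Fintype 𝒰] [MeasurableSpace 𝒰] [MeasurableSingletonClass 𝒰]
    (μ : Measure Ω) [IsProbabilityMeasure μ]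
    (U : Ω → 𝒰) (Y : Ω → 𝒴) (hU : Measurable U) (hY : Measurable Y) :
    ∑ y : 𝒴, (μ (Y ⁻¹' {y})).toReal * ent (μ[|Y ⁻¹' {y}]) U
      = ent μ (fun ω => (U ω, Y ω)) - ent μ Y := by
  have hpre : ∀ (u : 𝒰) (y : 𝒴),
      (fun ω => (U ω, Y ω)) ⁻¹' {(u, y)} = U ⁻¹' {u} ∩ Y ⁻¹' {y} := by
    intro u y; ext ω; simp [Prod.ext_iff]
  have key : ∀ y : 𝒴, (μ (Y ⁻¹' {y})).toReal * ent (μ[|Y ⁻¹' {y}]) U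
      = (∑ u : 𝒰, negMulLog (μ ((fun ω => (U ω, Y ω)) ⁻¹' {(u, y)})).toReal)
        - negMulLog (μ (Y ⁻¹' {y})).toReal := by
    intro y
    set s := Y ⁻¹' {y} with hs
    have hms : MeasurableSet s := hY (measurableSet_singleton y)
    rcases eq_or_ne (μ s) 0 with h0 | h0
    · have : ∀ u : 𝒰, μ ((fun ω => (U ω, Y ω)) ⁻¹' {(u, y)}) = 0 := by
        intro u
        rw [hpre]
        exact measure_mono_null Set.inter_subset_right h0
      simp [h0, this]
    · have hp : 0 < (μ s).toReal :=
        ENNReal.toReal_pos h0 (measure_ne_top μ s)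
      have hcond : ∀ u : 𝒰, ((μ[|s]) (U ⁻¹' {u})).toReal
          = (μ (U ⁻¹' {u} ∩ s)).toReal / (μ s).toReal := by
        intro u
        rw [cond_apply hms, ENNReal.toReal_mul, ENNReal.toReal_inv, Set.inter_comm]
        ring
      unfold ent
      rw [Finset.mul_sum]
      have : ∀ u : 𝒰, (μ s).toReal * negMulLog ((μ[|s]) (U ⁻¹' {u})).toReal
          = negMulLog (μ (U ⁻¹' {u} ∩ s)).toReal
            + (μ (U ⁻¹' {u} ∩ s)).toReal * Real.log (μ s).toReal := by
        intro u
        rw [hcond u, mul_negMulLog_div _ _ hp]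
      simp only [this, Finset.sum_add_distrib, ← Finset.sum_mul,
        sum_slices μ U hU s hms]
      have : negMulLog (μ s).toReal = -((μ s).toReal * Real.log (μ s).toReal) := by rw [negMulLog]; ring
      rw [this]
      congr 1
      · apply Finset.sum_congr rfl
        intro u _
        rw [hpre]
      · ring
  rw [Finset.sum_congr rfl (fun y _ => key y), Finset.sum_sub_distrib]
  unfold ent
  congr 1
  rw [Fintype.sum_prod_type, Finset.sum_comm]

/-- Entropy of an optimizer via conditional entropies (eq. (15) of Theorem 1's proof). -/
theorem optimizer_entropy_expansion {𝒳 𝒴 𝒰 : Type*} [Fintype 𝒳] [Nonempty 𝒳] [MeasurableSpace 𝒳] [MeasurableSingletonClass 𝒳]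
    [Fintype 𝒴] [Nonempty 𝒴] [MeasurableSpace 𝒴] [MeasurableSingletonClass 𝒴]
    [Fintype 𝒰] [Nonempty 𝒰] [MeasurableSpace 𝒰] [MeasurableSingletonClass 𝒰]
    (μ : Measure Ω) [IsProbabilityMeasure μ]
    (X : Ω → 𝒳) (Y : Ω → 𝒴) (U : Ω → 𝒰)
    (hX : Measurable X) (hY : Measurable Y) (hU : Measurable U)
    (h1 : mutInfo μ X U = 0)
    (h2 : condMutInfo μ X U Y = 0)
    (h3 : condEnt μ Y (fun ω => (X ω, U ω)) = 0) :
    ent μ U = condEnt μ Y X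
      + ∑ y : 𝒴, (μ (Y ⁻¹' {y})).toReal * ent (μ[|Y ⁻¹' {y}]) U := by
  rw [condEnt_sum μ U Y hU hY]
  have hA := ent_comp_equiv μ (fun ω => (X ω, Y ω)) (Equiv.prodComm 𝒳 𝒴)
  simp only [Equiv.prodComm_apply, Prod.swap_prod_mk] at hA
  have hB := ent_comp_equiv μ (fun ω => (Y ω, (X ω, U ω)))
      ((Equiv.prodComm 𝒴 (𝒳 × 𝒰)).trans (Equiv.prodAssoc 𝒳 𝒰 𝒴))
  simp only [Equiv.trans_apply, Equiv.prodComm_apply, Prod.swap_prod_mk,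
    Equiv.prodAssoc_apply] at hB
  unfold mutInfo at h1
  unfold condMutInfo at h2
  unfold condEnt at h3 ⊢
  linarith
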